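/- arXiv:2510.09181 — 2 statements merged into one kernel-verified Lean document; each statement's English description precedes it below -/
import Mathlib

section
/- Let S be a Haar-uniformly distributed random orthogonal matrix of dimension d, and let A, B be real symmetric d×d matrices. Then E[S A Sᵀ B S A Sᵀ] = p_A · (‖A‖_F²/d) · tr(B) · I + q_A · (‖A‖_F²/d) · B, where p_A = (d − r_A)/((d−1)(d+2)), q_A = (r_A + 1 + (r_A − 1)/(d − 1))/(d + 2), and r_A = (tr A)²/‖A‖_F² (with A ≠ 0). -/
open MeasureTheory Matrix

instance {d : ℕ} : MeasurableSpace (Matrix (Fin d) (Fin d) ℝ) := MeasurableSpace.pi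

/-- A probability measure on `d × d` real matrices is the Haar (uniform) distribution on the
orthogonal group if it is supported on orthogonal matrices and invariant under left and right
multiplication by any orthogonal matrix. -/
def IsHaarOrthogonal {d : ℕ} (μ : Measure (Matrix (Fin d) (Fin d) ℝ)) : Prop :=
  IsProbabilityMeasure μ ∧
  (∀ᵐ S ∂μ, S ∈ Matrix.orthogonalGroup (Fin d) ℝ) ∧
  (∀ Q ∈ Matrix.orthogonalGroup (Fin d) ℝ, μ.map (fun S => Q * S) = μ) ∧
  (∀ Q ∈ Matrix.orthogonalGroup (Fin d) ℝ, μ.map (fun S => S * Q) = μ)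

/-!
Put `X = S A Sᵀ`. By left invariance of Haar measure the law of `X` is invariant under
conjugation by orthogonal matrices, and almost surely `X` is symmetric with `tr X = tr A` and
`tr (X Xᵀ) = ‖A‖_F²`. Conjugating by signed permutation matrices shows
`E[X_pq X_rs] = u δ_pq δ_rs + v (δ_pr δ_qs + δ_ps δ_qr)` except possibly when `p = q = r = s`,
and conjugating by a reflection that mixes two coordinates gives `E[X_pp²] = u + 2v` as well.
Taking expectations of `(tr X)² = (tr A)²` and `tr (X Xᵀ) = ‖A‖_F²` gives two linear equations
for `u` and `v`, and then `E[X B X]_ij = (u + v) B_ij + v tr B δ_ij`.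
-/

open ProbabilityTheory

namespace Matrix

variable {n R : Type*} [Fintype n] [CommRing R]

theorem trace_mul_transpose_self (M : Matrix n n R) :
    (M * Mᵀ).trace = ∑ p, ∑ q, M p q * M p q := by
  simp [trace, mul_apply]

theorem mul_mul_transpose_apply_self_of_row [DecidableEq n] {Q X : Matrix n n R} {p q : n}
    {a b : R} (hrow : ∀ k, Q p k = (if k = p then a else 0) + (if k = q then b else 0))
    (hX : X.IsSymm) : (Q * X * Qᵀ) p p = a * a * X p p + 2 * a * b * X p q + b * b * X q q := by
  simp only [mul_apply, transpose_apply, hrow, add_mul, mul_add, ite_mul, mul_ite,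
    zero_mul, mul_zero, Finset.sum_add_distrib, Finset.sum_ite_eq', Finset.mem_univ, if_true]
  rw [hX.apply p q]
  ring

theorem IsSymm.mul_mul_transpose {A : Matrix n n R} (hA : A.IsSymm) (S : Matrix n n R) :
    (S * A * Sᵀ).IsSymm := by
  simp [IsSymm, transpose_mul, hA.eq, Matrix.mul_assoc]

variable [DecidableEq n]

theorem diagonal_mem_orthogonalGroup {v : n → R} (hv : ∀ i, v i * v i = 1) :
    diagonal v ∈ orthogonalGroup n R := by
  simp [mem_orthogonalGroup_iff, hv]

theorem permMatrix_mem_orthogonalGroup (σ : Equiv.Perm n) :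
    σ.permMatrix R ∈ orthogonalGroup n R := by
  rw [mem_orthogonalGroup_iff, transpose_permMatrix, ← permMatrix_mul, inv_mul_cancel,
    permMatrix_one]

theorem one_sub_two_smul_vecMulVec_mem_orthogonalGroup {v : n → R} (hv : v ⬝ᵥ v = 1) :
    1 - (2 : R) • vecMulVec v v ∈ orthogonalGroup n R := by
  rw [mem_orthogonalGroup_iff]
  simp only [transpose_sub, transpose_one, transpose_smul, transpose_vecMulVec, sub_mul, mul_sub,
    one_mul, mul_one, smul_mul_smul_comm, vecMulVec_mul_vecMulVec, hv, one_smul]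
  module

theorem diagonal_mul_mul_transpose_apply (v : n → R) (X : Matrix n n R) (p q : n) :
    (diagonal v * X * (diagonal v)ᵀ) p q = v p * X p q * v q := by
  simp [mul_diagonal, diagonal_mul]

theorem permMatrix_mul_mul_transpose_apply (σ : Equiv.Perm n) (X : Matrix n n R) (p q : n) :
    (σ.permMatrix R * X * (σ.permMatrix R)ᵀ) p q = X (σ p) (σ q) := by
  simp [PEquiv.toMatrix_toPEquiv_mul, PEquiv.mul_toMatrix_toPEquiv, Equiv.Perm.inv_def]

theorem trace_mul_mul_transpose {S : Matrix n n R} (hS : S ∈ orthogonalGroup n R)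
    (A : Matrix n n R) : (S * A * Sᵀ).trace = A.trace := by
  rw [trace_mul_cycle, (mem_orthogonalGroup_iff' n R).mp hS, one_mul]

theorem trace_mul_transpose_mul_mul_transpose {S : Matrix n n R} (hS : S ∈ orthogonalGroup n R)
    (A : Matrix n n R) : (S * A * Sᵀ * (S * A * Sᵀ)ᵀ).trace = (A * Aᵀ).trace := by
  have hconj : S * A * Sᵀ * (S * A * Sᵀ)ᵀ = S * (A * Aᵀ) * Sᵀ := by
    simp only [transpose_mul, transpose_transpose, Matrix.mul_assoc,
      ← Matrix.mul_assoc Sᵀ S, (mem_orthogonalGroup_iff' n R).mp hS, Matrix.one_mul]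
  rw [hconj, trace_mul_mul_transpose hS]

end Matrix

instance Matrix.borelSpace_fin {d : ℕ} : BorelSpace (Matrix (Fin d) (Fin d) ℝ) :=
  inferInstanceAs (BorelSpace (Fin d → Fin d → ℝ))

theorem Equiv.Perm.exists_apply_eq_and_apply_eq {α : Type*} [DecidableEq α] {a b a' b' : α}
    (hab : a ≠ b) (hab' : a' ≠ b') : ∃ σ : Equiv.Perm α, σ a = a' ∧ σ b = b' := by
  set τ := Equiv.swap a a'
  have hτb : τ b ≠ a' := by
    rw [← Equiv.swap_apply_left a a']
    exact τ.injective.ne hab.symm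
  refine ⟨τ.trans (Equiv.swap (τ b) b'), ?_, Equiv.swap_apply_left _ _⟩
  simp only [Equiv.trans_apply, τ, Equiv.swap_apply_left]
  exact Equiv.swap_apply_of_ne_of_ne hτb.symm hab'

/-- The conclusion says that some `t` occurs an odd number of times among `p, q, r, s`. -/
theorem exists_sign_mul_sign_mul_sign_mul_sign_eq_neg_one {α : Type*} [DecidableEq α]
    {p q r s : α} (h₁ : ¬(p = q ∧ r = s)) (h₂ : ¬(p = r ∧ q = s)) (h₃ : ¬(p = s ∧ q = r)) :
    ∃ t, (if p = t then -1 else 1) * (if q = t then -1 else 1) * (if r = t then -1 else 1) *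
      (if s = t then -1 else 1) = (-1 : ℝ) := by
  by_cases hpq : p = q
  · subst hpq
    have hrs : r ≠ s := fun h => h₁ ⟨rfl, h⟩
    by_cases hpr : p = r
    · subst hpr
      exact ⟨s, by simp [hrs]⟩
    · exact ⟨r, by simp [hpr, hrs.symm]⟩
  by_cases hpr : p = r
  · subst hpr
    have hqs : q ≠ s := fun h => h₂ ⟨rfl, h⟩
    exact ⟨q, by simp [hpq, hqs.symm]⟩
  by_cases hps : p = s
  · subst hps
    have hqr : q ≠ r := fun h => h₃ ⟨rfl, h⟩
    exact ⟨q, by simp [hpq, hqr.symm]⟩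
  exact ⟨p, by simp [Ne.symm hpq, Ne.symm hpr, Ne.symm hps]⟩

def isotropicMoment {α : Type*} [DecidableEq α] (u v : ℝ) (p q r s : α) : ℝ :=
  u * (if p = q ∧ r = s then 1 else 0) +
    v * ((if p = r ∧ q = s then 1 else 0) + (if p = s ∧ q = r then 1 else 0))

def HasOrthogonallyInvariantLaw {Ω : Type*} [MeasurableSpace Ω] {d : ℕ}
    (X : Ω → Matrix (Fin d) (Fin d) ℝ) (μ : Measure Ω) : Prop :=
  ∀ Q ∈ orthogonalGroup (Fin d) ℝ, IdentDistrib (fun ω => Q * X ω * Qᵀ) X μ μ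

namespace HasOrthogonallyInvariantLaw

variable {Ω : Type*} [MeasurableSpace Ω] {μ : Measure Ω} {d : ℕ}
  {X : Ω → Matrix (Fin d) (Fin d) ℝ}

theorem aemeasurable (hX : HasOrthogonallyInvariantLaw X μ) : AEMeasurable X μ :=
  (hX 1 (one_mem _)).aemeasurable_snd

theorem integral_conj_apply_mul_conj_apply (hX : HasOrthogonallyInvariantLaw X μ) {Q}
    (hQ : Q ∈ orthogonalGroup (Fin d) ℝ) (p q r s : Fin d) :
    ∫ ω, (Q * X ω * Qᵀ) p q * (Q * X ω * Qᵀ) r s ∂μ = ∫ ω, X ω p q * X ω r s ∂μ :=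
  ((hX Q hQ).comp (u := fun M : Matrix (Fin d) (Fin d) ℝ => M p q * M r s)
    (by fun_prop)).integral_eq

theorem integral_apply_mul_apply_perm (hX : HasOrthogonallyInvariantLaw X μ)
    (σ : Equiv.Perm (Fin d)) (p q r s : Fin d) :
    ∫ ω, X ω (σ p) (σ q) * X ω (σ r) (σ s) ∂μ = ∫ ω, X ω p q * X ω r s ∂μ := by
  simpa only [permMatrix_mul_mul_transpose_apply] using
    hX.integral_conj_apply_mul_conj_apply (permMatrix_mem_orthogonalGroup σ) p q r s

theorem integral_apply_mul_apply_eq_zero (hX : HasOrthogonallyInvariantLaw X μ) (t : Fin d)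
    {p q r s : Fin d}
    (hodd : (if p = t then -1 else 1) * (if q = t then -1 else 1) * (if r = t then -1 else 1) *
      (if s = t then -1 else 1) = (-1 : ℝ)) :
    ∫ ω, X ω p q * X ω r s ∂μ = 0 := by
  set ε : Fin d → ℝ := fun k => if k = t then -1 else 1
  have hε : ∀ k, ε k * ε k = 1 := fun k => by by_cases k = t <;> simp [ε, *]
  have hflip := hX.integral_conj_apply_mul_conj_apply (diagonal_mem_orthogonalGroup hε) p q r s
  simp only [diagonal_mul_mul_transpose_apply] at hflip
  have hneg : ∀ ω, ε p * X ω p q * ε q * (ε r * X ω r s * ε s) = -(X ω p q * X ω r s) :=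
    fun ω => by linear_combination (X ω p q * X ω r s) * hodd
  simp only [hneg, integral_neg] at hflip
  linarith

theorem integral_apply_mul_apply_self_diag (hX : HasOrthogonallyInvariantLaw X μ)
    (hsymm : ∀ᵐ ω ∂μ, (X ω).IsSymm)
    (hint : ∀ p q r s, Integrable (fun ω => X ω p q * X ω r s) μ) {p q : Fin d} (hpq : p ≠ q) :
    ∫ ω, X ω p p * X ω p p ∂μ =
      ∫ ω, X ω p p * X ω q q ∂μ + 2 * ∫ ω, X ω p q * X ω p q ∂μ := by
  -- Any orthogonal matrix whose `p`-th row has both `p`- and `q`-entries nonzero would do;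
  -- the reflection along the rational unit vector `(3/5) e_p + (4/5) e_q` avoids square roots.
  set v : Fin d → ℝ := Pi.single p (3 / 5) + Pi.single q (4 / 5)
  have hv : v ⬝ᵥ v = 1 := by
    simp only [v, dotProduct_add, dotProduct_single, Pi.add_apply, Pi.single_eq_same,
      Pi.single_eq_of_ne hpq, Pi.single_eq_of_ne hpq.symm, add_zero, zero_add]
    norm_num
  set H := 1 - (2 : ℝ) • vecMulVec v v
  have hrow : ∀ k, H p k = (if k = p then 7 / 25 else 0) + (if k = q then -24 / 25 else 0) := by
    intro k
    simp only [H, v, Matrix.sub_apply, one_apply, Matrix.smul_apply, vecMulVec_apply,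
      Pi.add_apply, Pi.single_apply, smul_eq_mul]
    split_ifs <;> subst_vars <;> norm_num [hpq, Ne.symm hpq] at *
  have hY : ∀ᵐ ω ∂μ, (H * X ω * Hᵀ) p p =
      49 / 625 * X ω p p - 336 / 625 * X ω p q + 576 / 625 * X ω q q := by
    filter_upwards [hsymm] with ω hω
    rw [mul_mul_transpose_apply_self_of_row hrow hω]
    ring
  have hrot := hX.integral_conj_apply_mul_conj_apply
    (one_sub_two_smul_vecMulVec_mem_orthogonalGroup hv) p p p p
  rw [integral_congr_ae (hY.mono fun ω h => by rw [h])] at hrot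
  have hexpand : ∀ ω, (49 / 625 * X ω p p - 336 / 625 * X ω p q + 576 / 625 * X ω q q) *
      (49 / 625 * X ω p p - 336 / 625 * X ω p q + 576 / 625 * X ω q q) =
      (49 / 625) ^ 2 * (X ω p p * X ω p p) + (576 / 625) ^ 2 * (X ω q q * X ω q q)
      + 2 * (49 / 625) * (576 / 625) * (X ω p p * X ω q q)
      + (336 / 625) ^ 2 * (X ω p q * X ω p q) - 2 * (49 / 625) * (336 / 625) * (X ω p p * X ω p q)
      - 2 * (336 / 625) * (576 / 625) * (X ω q q * X ω p q) := fun ω => by ring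
  simp only [hexpand] at hrot
  simp (disch := fun_prop) only [integral_add, integral_sub, integral_const_mul] at hrot
  have hqq : ∫ ω, X ω q q * X ω q q ∂μ = ∫ ω, X ω p p * X ω p p ∂μ := by
    simpa using hX.integral_apply_mul_apply_perm (Equiv.swap p q) p p p p
  have hppq : ∫ ω, X ω p p * X ω p q ∂μ = 0 :=
    hX.integral_apply_mul_apply_eq_zero q (by simp [hpq])
  have hqqp : ∫ ω, X ω q q * X ω p q ∂μ = 0 :=
    hX.integral_apply_mul_apply_eq_zero p (by simp [hpq.symm])
  rw [hqq, hppq, hqqp] at hrot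
  -- `(336/625)² = 4 (49/625) (576/625) = 2 (1 - (49/625)² - (576/625)²)`
  linarith

theorem integral_apply_mul_apply (hX : HasOrthogonallyInvariantLaw X μ)
    (hsymm : ∀ᵐ ω ∂μ, (X ω).IsSymm)
    (hint : ∀ p q r s, Integrable (fun ω => X ω p q * X ω r s) μ) {i₀ j₀ : Fin d} (h₀ : i₀ ≠ j₀)
    (p q r s : Fin d) :
    ∫ ω, X ω p q * X ω r s ∂μ =
      isotropicMoment (∫ ω, X ω i₀ i₀ * X ω j₀ j₀ ∂μ) (∫ ω, X ω i₀ j₀ * X ω i₀ j₀ ∂μ) p q r s := by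
  have hdiag : ∀ {p r}, p ≠ r → ∫ ω, X ω p p * X ω r r ∂μ = ∫ ω, X ω i₀ i₀ * X ω j₀ j₀ ∂μ := by
    intro p r hpr
    obtain ⟨σ, rfl, rfl⟩ := Equiv.Perm.exists_apply_eq_and_apply_eq h₀ hpr
    exact hX.integral_apply_mul_apply_perm σ _ _ _ _
  have hoff : ∀ {p q}, p ≠ q → ∫ ω, X ω p q * X ω p q ∂μ = ∫ ω, X ω i₀ j₀ * X ω i₀ j₀ ∂μ := by
    intro p q hpq
    obtain ⟨σ, rfl, rfl⟩ := Equiv.Perm.exists_apply_eq_and_apply_eq h₀ hpq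
    exact hX.integral_apply_mul_apply_perm σ _ _ _ _
  have hsame : ∀ p, ∫ ω, X ω p p * X ω p p ∂μ =
      ∫ ω, X ω i₀ i₀ * X ω j₀ j₀ ∂μ + 2 * ∫ ω, X ω i₀ j₀ * X ω i₀ j₀ ∂μ := by
    intro p
    rw [← hX.integral_apply_mul_apply_self_diag hsymm hint h₀]
    simpa using hX.integral_apply_mul_apply_perm (Equiv.swap i₀ p) i₀ i₀ i₀ i₀
  unfold isotropicMoment
  by_cases h₁ : p = q ∧ r = s
  · obtain ⟨rfl, rfl⟩ := h₁
    by_cases hpr : p = r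
    · subst hpr
      simp only [hsame, and_self, ↓reduceIte, mul_one]
      ring
    · simp [hpr, hdiag hpr]
  by_cases h₂ : p = r ∧ q = s
  · obtain ⟨rfl, rfl⟩ := h₂
    have hpq : p ≠ q := fun h => h₁ ⟨h, h⟩
    simp [hpq, hoff hpq]
  by_cases h₃ : p = s ∧ q = r
  · obtain ⟨rfl, rfl⟩ := h₃
    have hpq : p ≠ q := fun h => h₁ ⟨h, h.symm⟩
    have hswap : ∫ ω, X ω p q * X ω q p ∂μ = ∫ ω, X ω p q * X ω p q ∂μ :=
      integral_congr_ae (hsymm.mono fun ω hω => congrArg (X ω p q * ·) (hω.apply p q))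
    simp [hpq, hswap, hoff hpq]
  obtain ⟨t, ht⟩ := exists_sign_mul_sign_mul_sign_mul_sign_eq_neg_one h₁ h₂ h₃
  simp [h₁, h₂, h₃, hX.integral_apply_mul_apply_eq_zero t ht]

end HasOrthogonallyInvariantLaw

section IsotropicMoments

variable {Ω : Type*} [MeasurableSpace Ω] {μ : Measure Ω} {d : ℕ}
  {X : Ω → Matrix (Fin d) (Fin d) ℝ}

theorem integrable_apply_mul_apply_of_ae_trace_mul_transpose_eq [IsFiniteMeasure μ]
    (hX : AEMeasurable X μ) {f : ℝ} (hfrob : ∀ᵐ ω ∂μ, (X ω * (X ω)ᵀ).trace = f)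
    (p q r s : Fin d) : Integrable (fun ω => X ω p q * X ω r s) μ := by
  refine (integrable_const f).mono' (by fun_prop) ?_
  filter_upwards [hfrob] with ω hω
  have hle : ∀ a b, X ω a b * X ω a b ≤ f := by
    intro a b
    rw [← hω, trace_mul_transpose_self]
    refine le_trans ?_ (Finset.single_le_sum (fun a _ => ?_) (Finset.mem_univ a))
    · exact Finset.single_le_sum (fun b _ => mul_self_nonneg (X ω a b)) (Finset.mem_univ b)
    · exact Finset.sum_nonneg fun b _ => mul_self_nonneg (X ω a b)
  rw [Real.norm_eq_abs, abs_le]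
  constructor <;> nlinarith [hle p q, hle r s, sq_nonneg (X ω p q - X ω r s),
    sq_nonneg (X ω p q + X ω r s)]

variable {u v : ℝ}

theorem sq_eq_of_ae_trace_eq [IsProbabilityMeasure μ]
    (hint : ∀ p q r s, Integrable (fun ω => X ω p q * X ω r s) μ)
    (hmom : ∀ p q r s, ∫ ω, X ω p q * X ω r s ∂μ = isotropicMoment u v p q r s) {t : ℝ}
    (htr : ∀ᵐ ω ∂μ, (X ω).trace = t) : (d : ℝ) ^ 2 * u + 2 * d * v = t ^ 2 := by
  have hsq : ∫ ω, (X ω).trace * (X ω).trace ∂μ = t ^ 2 := by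
    rw [integral_congr_ae (htr.mono fun ω h => by rw [h])]
    simp [sq]
  simp only [trace, diag, Finset.sum_mul_sum] at hsq
  simp (disch := intros; fun_prop) only [integral_finsetSum, hmom, isotropicMoment] at hsq
  simp only [and_self, ↓reduceIte, mul_one, mul_add, mul_ite, mul_zero, Finset.sum_add_distrib,
    Finset.sum_const, Finset.card_univ, Fintype.card_fin, nsmul_eq_mul, Finset.sum_ite_eq,
    Finset.mem_univ] at hsq
  linear_combination hsq

theorem eq_of_ae_trace_mul_transpose_eq [IsProbabilityMeasure μ]
    (hint : ∀ p q r s, Integrable (fun ω => X ω p q * X ω r s) μ)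
    (hmom : ∀ p q r s, ∫ ω, X ω p q * X ω r s ∂μ = isotropicMoment u v p q r s) {f : ℝ}
    (hfrob : ∀ᵐ ω ∂μ, (X ω * (X ω)ᵀ).trace = f) : (d : ℝ) * u + d * (d + 1) * v = f := by
  have htrace : ∫ ω, (X ω * (X ω)ᵀ).trace ∂μ = f := by
    rw [integral_congr_ae hfrob]
    simp
  simp only [trace_mul_transpose_self] at htrace
  simp (disch := intros; fun_prop) only [integral_finsetSum, hmom, isotropicMoment] at htrace
  simp only [and_self, mul_ite, mul_one, mul_zero, ↓reduceIte, ite_and, mul_add,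
    Finset.sum_add_distrib, Finset.sum_ite_eq, Finset.mem_univ, Finset.sum_const, Finset.card_univ,
    Fintype.card_fin, nsmul_eq_mul] at htrace
  linear_combination htrace

theorem integral_mul_mul_apply_eq (hint : ∀ p q r s, Integrable (fun ω => X ω p q * X ω r s) μ)
    (hmom : ∀ p q r s, ∫ ω, X ω p q * X ω r s ∂μ = isotropicMoment u v p q r s)
    {B : Matrix (Fin d) (Fin d) ℝ} (hB : B.IsSymm) (i j : Fin d) :
    ∫ ω, (X ω * B * X ω) i j ∂μ = (u + v) * B i j + v * B.trace * (if i = j then 1 else 0) := by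
  have hexpand : ∀ ω, (X ω * B * X ω) i j = ∑ k, ∑ l, B k l * (X ω i k * X ω l j) := by
    intro ω
    simp only [mul_apply, Finset.sum_mul]
    rw [Finset.sum_comm]
    exact Finset.sum_congr rfl fun k _ => Finset.sum_congr rfl fun l _ => by ring
  simp only [hexpand]
  simp (disch := intros; fun_prop) only [integral_finsetSum, integral_const_mul, hmom,
    isotropicMoment]
  simp only [eq_comm, ite_and, mul_ite, mul_one, mul_zero, mul_add, Finset.sum_add_distrib,
    Finset.sum_ite_irrel, Finset.sum_ite_eq, Finset.mem_univ, ↓reduceIte, Finset.sum_const_zero,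
    trace, diag_apply]
  rw [hB.apply, ← Finset.sum_mul]
  split_ifs <;> ring

end IsotropicMoments

theorem integral_mul_mul_apply_of_hasOrthogonallyInvariantLaw {Ω : Type*} [MeasurableSpace Ω]
    {μ : Measure Ω} [IsProbabilityMeasure μ] {d : ℕ} {X : Ω → Matrix (Fin d) (Fin d) ℝ}
    (hX : HasOrthogonallyInvariantLaw X μ) (hsymm : ∀ᵐ ω ∂μ, (X ω).IsSymm) (hd : 2 ≤ d)
    {t f : ℝ} (htr : ∀ᵐ ω ∂μ, (X ω).trace = t) (hfrob : ∀ᵐ ω ∂μ, (X ω * (X ω)ᵀ).trace = f)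
    {B : Matrix (Fin d) (Fin d) ℝ} (hB : B.IsSymm) (i j : Fin d) :
    ∫ ω, (X ω * B * X ω) i j ∂μ =
      (d * f - t ^ 2) / (d * (d - 1) * (d + 2)) * B.trace * (if i = j then 1 else 0)
      + (d * t ^ 2 + (d - 2) * f) / (d * (d - 1) * (d + 2)) * B i j := by
  have hint := integrable_apply_mul_apply_of_ae_trace_mul_transpose_eq hX.aemeasurable hfrob
  obtain ⟨i₀, j₀, h₀⟩ := (Fin.nontrivial_iff_two_le.mpr hd).exists_pair_ne
  have hmom := hX.integral_apply_mul_apply hsymm hint h₀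
  set u := ∫ ω, X ω i₀ i₀ * X ω j₀ j₀ ∂μ
  set v := ∫ ω, X ω i₀ j₀ * X ω i₀ j₀ ∂μ
  have htr2 := sq_eq_of_ae_trace_eq hint hmom htr
  have hfrob2 := eq_of_ae_trace_mul_transpose_eq hint hmom hfrob
  rw [integral_mul_mul_apply_eq hint hmom hB]
  have hd' : (2 : ℝ) ≤ d := by exact_mod_cast hd
  have hd₀ : (d : ℝ) ≠ 0 := by linarith
  have hd₁ : (d : ℝ) - 1 ≠ 0 := by linarith
  have hd₂ : (d : ℝ) + 2 ≠ 0 := by linarith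
  have hv : v = (d * f - t ^ 2) / (d * (d - 1) * (d + 2)) := by
    field_simp
    linear_combination d * hfrob2 - htr2
  have huv : u + v = (d * t ^ 2 + (d - 2) * f) / (d * (d - 1) * (d + 2)) := by
    field_simp
    linear_combination d * htr2 + (d - 2) * hfrob2
  rw [huv, hv]
  ring

theorem hasOrthogonallyInvariantLaw_mul_mul_transpose {d : ℕ}
    {μ : Measure (Matrix (Fin d) (Fin d) ℝ)}
    (hL : ∀ Q ∈ orthogonalGroup (Fin d) ℝ, μ.map (fun S => Q * S) = μ)
    (A : Matrix (Fin d) (Fin d) ℝ) : HasOrthogonallyInvariantLaw (fun S => S * A * Sᵀ) μ := by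
  intro Q hQ
  have hconj : Measurable fun S : Matrix (Fin d) (Fin d) ℝ => S * A * Sᵀ :=
    (by fun_prop : Continuous _).measurable
  have hmul : Measurable fun S : Matrix (Fin d) (Fin d) ℝ => Q * S :=
    (by fun_prop : Continuous _).measurable
  have hcomp : (fun S => Q * (S * A * Sᵀ) * Qᵀ) = (fun S => S * A * Sᵀ) ∘ (fun S => Q * S) := by
    funext S
    simp [Matrix.mul_assoc, transpose_mul]
  refine ⟨?_, hconj.aemeasurable, ?_⟩
  · rw [hcomp]
    exact (hconj.comp hmul).aemeasurable
  · rw [hcomp, ← Measure.map_map hconj hmul, hL Q hQ]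

theorem haar_orthogonal_fourth_moment_general {d : ℕ} (hd : 2 ≤ d)
    (μ : Measure (Matrix (Fin d) (Fin d) ℝ)) (hμ : IsHaarOrthogonal μ)
    (A B : Matrix (Fin d) (Fin d) ℝ) (hA : A.IsSymm) (hB : B.IsSymm)
    (fA rA pA qA : ℝ)
    (hfA : fA = (A * Aᵀ).trace)       -- ‖A‖_F²
    (hrA : rA = A.trace ^ 2 / fA)      -- effective rank of A
    (hpA : pA = ((d : ℝ) - rA) / (((d : ℝ) - 1) * ((d : ℝ) + 2)))
    (hqA : qA = (rA + 1 + (rA - 1) / ((d : ℝ) - 1)) / ((d : ℝ) + 2))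
    (i j : Fin d) :
    ∫ S, (S * A * Sᵀ * B * S * A * Sᵀ) i j ∂μ =
      ((pA * (fA / d) * B.trace) • (1 : Matrix (Fin d) (Fin d) ℝ)
        + (qA * (fA / d)) • B) i j := by
  obtain ⟨hprob, horth, hL, -⟩ := hμ
  have hrf : rA * fA = A.trace ^ 2 := by
    refine hrA ▸ div_mul_cancel_of_imp fun hf => ?_
    rw [hfA, ← conjTranspose_eq_transpose_of_trivial,
      trace_mul_conjTranspose_self_eq_zero_iff] at hf
    simp [hf]
  have hmoment := integral_mul_mul_apply_of_hasOrthogonallyInvariantLaw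
    (hasOrthogonallyInvariantLaw_mul_mul_transpose hL A)
    (ae_of_all _ fun S => hA.mul_mul_transpose S) hd
    (horth.mono fun S hS => trace_mul_mul_transpose hS A)
    (horth.mono fun S hS => trace_mul_transpose_mul_mul_transpose hS A) hB i j
  simp only [Matrix.mul_assoc] at hmoment ⊢
  have hd' : (2 : ℝ) ≤ d := by exact_mod_cast hd
  have hd₁ : (d : ℝ) - 1 ≠ 0 := by linarith
  have hd₂ : (d : ℝ) + 2 ≠ 0 := by linarith
  rw [hmoment, ← hfA, ← hrf, hpA, hqA]
  simp only [Matrix.add_apply, Matrix.smul_apply, one_apply, smul_eq_mul]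
  field_simp
  ring

/-- Lemma (fourth moment of a Haar random orthogonal matrix):
`E[S A Sᵀ B S A Sᵀ] = p_A (‖A‖_F²/d) tr(B) I + q_A (‖A‖_F²/d) B`, stated entrywise. -/
theorem haar_orthogonal_fourth_moment {d : ℕ} (hd : 2 ≤ d)
    (μ : Measure (Matrix (Fin d) (Fin d) ℝ)) (hμ : IsHaarOrthogonal μ)
    (A B : Matrix (Fin d) (Fin d) ℝ) (hA : A.IsSymm) (hB : B.IsSymm) (hA0 : A ≠ 0)
    (fA rA pA qA : ℝ)
    (hfA : fA = (A * Aᵀ).trace)       -- ‖A‖_F²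
    (hrA : rA = A.trace ^ 2 / fA)      -- effective rank of A
    (hpA : pA = ((d : ℝ) - rA) / (((d : ℝ) - 1) * ((d : ℝ) + 2)))
    (hqA : qA = (rA + 1 + (rA - 1) / ((d : ℝ) - 1)) / ((d : ℝ) + 2))
    (i j : Fin d) :
    ∫ S, (S * A * Sᵀ * B * S * A * Sᵀ) i j ∂μ =
      ((pA * (fA / d) * B.trace) • (1 : Matrix (Fin d) (Fin d) ℝ)
        + (qA * (fA / d)) • B) i j :=
  haar_orthogonal_fourth_moment_general hd μ hμ A B hA hB fA rA pA qA hfA hrA hpA hqA i j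
end

section
/- Let Σ be a nonzero diagonal d×d matrix with nonnegative entries, and for k ≥ 0 write erank(Σ^k) = (tr Σ^k)²/tr(Σ^{2k}). Then for integers a, b with 0 ≤ b ≤ a, erank(Σ^a) ≤ erank(Σ^b). -/
open Matrix

private lemma sum_pow_chebyshev {d : ℕ} (f : Fin d → ℝ) (hf : ∀ i, 0 ≤ f i)
    (p x y : ℕ) :
    (∑ i, f i ^ (p + x)) * (∑ i, f i ^ (p + y)) ≤
      (∑ i, f i ^ p) * (∑ i, f i ^ (p + (x + y))) := by
  have expand :
      (∑ i, ∑ j, f i ^ p * f j ^ p * (f i ^ x - f j ^ x) * (f i ^ y - f j ^ y))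
        = ((∑ i, f i ^ p) * (∑ j, f j ^ (p + (x + y)))
            + (∑ i, f i ^ (p + (x + y))) * (∑ j, f j ^ p))
          - ((∑ i, f i ^ (p + x)) * (∑ j, f j ^ (p + y))
            + (∑ i, f i ^ (p + y)) * (∑ j, f j ^ (p + x))) := by
    simp only [Finset.sum_mul_sum, ← Finset.sum_add_distrib, ← Finset.sum_sub_distrib]
    refine Finset.sum_congr rfl fun i _ => ?_
    refine Finset.sum_congr rfl fun j _ => ?_
    simp only [pow_add]; ring
  have nonneg :
      0 ≤ ∑ i, ∑ j, f i ^ p * f j ^ p * (f i ^ x - f j ^ x) * (f i ^ y - f j ^ y) := by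
    refine Finset.sum_nonneg fun i _ => Finset.sum_nonneg fun j _ => ?_
    have hA : 0 ≤ f i ^ p * f j ^ p :=
      mul_nonneg (pow_nonneg (hf i) p) (pow_nonneg (hf j) p)
    have key2 : f i ^ p * f j ^ p * (f i ^ x - f j ^ x) * (f i ^ y - f j ^ y)
        = (f i ^ p * f j ^ p) * ((f i ^ x - f j ^ x) * (f i ^ y - f j ^ y)) := by ring
    rw [key2]
    rcases le_total (f i) (f j) with h | h
    · have hx := pow_le_pow_left₀ (hf i) h x
      have hy := pow_le_pow_left₀ (hf i) h y
      have hsw : (f i ^ x - f j ^ x) * (f i ^ y - f j ^ y)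
          = (f j ^ x - f i ^ x) * (f j ^ y - f i ^ y) := by ring
      rw [hsw]
      exact mul_nonneg hA (mul_nonneg (by linarith) (by linarith))
    · have hx := pow_le_pow_left₀ (hf j) h x
      have hy := pow_le_pow_left₀ (hf j) h y
      exact mul_nonneg hA (mul_nonneg (by linarith) (by linarith))
  rw [expand] at nonneg
  nlinarith [nonneg]

/-- The effective rank `erank(Σ^k) = (tr Σ^k)² / tr(Σ^{2k})` of powers of a nonzero
nonnegative diagonal matrix is non-increasing in the exponent: for `0 ≤ b ≤ a`,
`erank(Σ^a) ≤ erank(Σ^b)`. -/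
theorem erank_pow_antitone {d : ℕ}
    (V : Matrix (Fin d) (Fin d) ℝ) (hdiag : V.IsDiag) (hnn : ∀ i, 0 ≤ V i i)
    (hV0 : V ≠ 0) (a b : ℕ) (hba : b ≤ a) :
    (V ^ a).trace ^ 2 / (V ^ (2 * a)).trace ≤ (V ^ b).trace ^ 2 / (V ^ (2 * b)).trace := by
  have hVdiag : V = Matrix.diagonal (fun i => V i i) := (Matrix.IsDiag.diagonal_diag hdiag).symm
  set S : ℕ → ℝ := fun k => ∑ i, V i i ^ k with hS
  have htr : ∀ k, (V ^ k).trace = S k := by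
    intro k
    conv_lhs => rw [hVdiag]
    rw [Matrix.diagonal_pow, Matrix.trace_diagonal]
    simp [hS]
  have hex : ∃ i, 0 < V i i := by
    by_contra h
    push_neg at h
    apply hV0
    ext i j
    by_cases hij : i = j
    · subst hij
      simpa using le_antisymm (h i) (hnn i)
    · simpa using hdiag hij
  obtain ⟨i0, hi0⟩ := hex
  have hSpos : ∀ k, 0 < S k := by
    intro k
    refine lt_of_lt_of_le (pow_pos hi0 k) ?_
    exact Finset.single_le_sum (fun i _ => pow_nonneg (hnn i) k) (Finset.mem_univ i0)
  obtain ⟨t, rfl⟩ : ∃ t, a = b + t := ⟨a - b, (Nat.add_sub_cancel' hba).symm⟩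
  rw [htr, htr, htr, htr, div_le_div_iff₀ (hSpos _) (hSpos _)]
  have key := sum_pow_chebyshev (fun i => V i i) hnn
  have k1 : S (b + t) * S (b + t) ≤ S b * S (b + (t + t)) := key b t t
  have k2 : S (b + (t + t)) * S (b + b) ≤ S b * S (b + ((t + t) + b)) := key b (t + t) b
  have e1 : b + b = 2 * b := by ring
  have e2 : b + ((t + t) + b) = 2 * (b + t) := by ring
  rw [e1, e2] at k2
  have m1 : S (b + t) * S (b + t) * S (2 * b) ≤ (S b * S (b + (t + t))) * S (2 * b) :=
    mul_le_mul_of_nonneg_right k1 (hSpos _).le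
  have m2 : S b * (S (b + (t + t)) * S (2 * b)) ≤ S b * (S b * S (2 * (b + t))) :=
    mul_le_mul_of_nonneg_left k2 (hSpos b).le
  calc S (b + t) ^ 2 * S (2 * b) = S (b + t) * S (b + t) * S (2 * b) := by ring
    _ ≤ (S b * S (b + (t + t))) * S (2 * b) := m1
    _ = S b * (S (b + (t + t)) * S (2 * b)) := by ring
    _ ≤ S b * (S b * S (2 * (b + t))) := m2
    _ = S b ^ 2 * S (2 * (b + t)) := by ring
end
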